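/- Let t be an introduce node introducing v with child t', and let S' ⊆ V(G[t']) be a good subset of G[t'] with S' ∩ X_{t'} ≠ ∅ or S' = ∅. Then S' ∪ {v} is a good subset of G[t], and moreover the connected-component partition of (S' ∪ {v}) ∩ X_t is obtained from that of S' ∩ X_{t'} by adding {v} as a new class and merging it with the classes of all u ∈ S' ∩ X_{t'} adjacent to v. -/
import Mathlib


/-- `a` and `b` lie in `S` and are connected by a path within the induced subgraph `G[S]`. -/
def ReachIn {V : Type*} (G : SimpleGraph V) (S : Set V) (a b : V) : Prop :=
  ∃ (ha : a ∈ S) (hb : b ∈ S), (G.induce S).Reachable ⟨a, ha⟩ ⟨b, hb⟩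

/-- `S` is a *good* subset with respect to the bag `X`. -/
def Good {V : Type*} (G : SimpleGraph V) (S X : Set V) : Prop :=
  (G.induce S).Connected ∨ ∀ a ∈ S, ∃ b ∈ X, ReachIn G S a b

lemma reachIn_mono {V : Type*} (G : SimpleGraph V) {S T : Set V} (h : S ⊆ T) {a b : V} :
    ReachIn G S a b → ReachIn G T a b := by
  rintro ⟨ha, hb, hr⟩
  refine ⟨h ha, h hb, ?_⟩
  let f : G.induce S →g G.induce T := ⟨fun x => ⟨x.1, h x.2⟩, fun hadj => hadj⟩
  exact hr.map f

lemma reachIn_of_adj {V : Type*} (G : SimpleGraph V) {S : Set V} {a b : V}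
    (ha : a ∈ S) (hb : b ∈ S) (h : G.Adj a b) : ReachIn G S a b :=
  ⟨ha, hb, SimpleGraph.Adj.reachable h⟩

lemma reachIn_refl {V : Type*} (G : SimpleGraph V) {S : Set V} {a : V} (ha : a ∈ S) :
    ReachIn G S a a := ⟨ha, ha, SimpleGraph.Reachable.refl _⟩

lemma reachIn_symm {V : Type*} (G : SimpleGraph V) {S : Set V} {a b : V} :
    ReachIn G S a b → ReachIn G S b a := by
  rintro ⟨ha, hb, hr⟩; exact ⟨hb, ha, hr.symm⟩

lemma reachIn_trans {V : Type*} (G : SimpleGraph V) {S : Set V} {a b c : V} :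
    ReachIn G S a b → ReachIn G S b c → ReachIn G S a c := by
  rintro ⟨ha, hb, hr⟩ ⟨hb', hc, hr'⟩
  exact ⟨ha, hc, hr.trans hr'⟩

/-- at an introduce node `t` introducing `v` with child `t'`, if
`S' ⊆ V(G[t'])` is a good subset of `G[t']` with `S' ∩ X_{t'} ≠ ∅` or `S' = ∅`, then
`S' ∪ {v}` is a good subset of `G[t]`, and the connected-component partition of
`(S' ∪ {v}) ∩ X_t` is obtained from that of `S' ∩ X_{t'}` by adding `{v}` as a new class
and merging it with the classes of all `u ∈ S' ∩ X_{t'}` adjacent to `v`: two elements of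
`(S' ∪ {v}) ∩ X_t` lie in the same component of `G[S' ∪ {v}]` iff they are related by the
equivalence closure of the union of the component relation of `G[S']` with the pairs
`(v, u)` for `u ∈ S' ∩ X_{t'}` adjacent to `v`. -/
theorem introduce_good_characteristic {V : Type*} (G : SimpleGraph V)
    (Vt Vt' Xt Xt' : Set V) (v : V)
    (hXt : Xt = insert v Xt') (hvX : v ∉ Xt')
    (hVt : Vt = Vt' ∪ {v}) (hvV : v ∉ Vt')
    (hXV : Xt' ⊆ Vt')
    (hadj : ∀ u ∈ Vt, G.Adj v u → u ∈ Xt')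
    (S' : Set V) (hS' : S' ⊆ Vt')
    (hgood : Good G S' Xt') (hcase : (S' ∩ Xt').Nonempty ∨ S' = ∅) :
    Good G (S' ∪ {v}) Xt ∧
    (∀ a ∈ (S' ∪ {v}) ∩ Xt, ∀ b ∈ (S' ∪ {v}) ∩ Xt,
      (ReachIn G (S' ∪ {v}) a b ↔
        Relation.EqvGen (fun x y =>
          ReachIn G S' x y ∨
          (x = v ∧ y ∈ S' ∩ Xt' ∧ G.Adj v y) ∨
          (y = v ∧ x ∈ S' ∩ Xt' ∧ G.Adj v x)) a b)) := by
  have hsub : S' ⊆ S' ∪ {v} := Set.subset_union_left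
  set R : V → V → Prop := fun x y =>
      ReachIn G S' x y ∨
      (x = v ∧ y ∈ S' ∩ Xt' ∧ G.Adj v y) ∨
      (y = v ∧ x ∈ S' ∩ Xt' ∧ G.Adj v x) with hR
  constructor
  · -- Goodness
    right
    rintro a ha
    rcases ha with ha | ha
    · -- a ∈ S'
      rcases hcase with ⟨c, hcS, hcX⟩ | hempty
      · have hcXt : c ∈ Xt := by rw [hXt]; exact Set.mem_insert_of_mem _ hcX
        rcases hgood with hconn | hall
        · refine ⟨c, hcXt, reachIn_mono G hsub ⟨ha, hcS, ?_⟩⟩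
          exact hconn.preconnected ⟨a, ha⟩ ⟨c, hcS⟩
        · obtain ⟨b, hbX, hrb⟩ := hall a ha
          exact ⟨b, by rw [hXt]; exact Set.mem_insert_of_mem _ hbX, reachIn_mono G hsub hrb⟩
      · exact absurd (hempty ▸ ha) (Set.notMem_empty a)
    · -- a = v
      rcases ha with rfl
      exact ⟨a, by rw [hXt]; exact Set.mem_insert _ _,
        reachIn_refl G (Set.mem_union_right _ rfl)⟩
  · rintro a ⟨haS, haX⟩ b ⟨hbS, hbX⟩
    constructor
    · -- ReachIn → EqvGen
      rintro ⟨ha', hb', ⟨p⟩⟩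
      clear haS haX hbS hbX
      have key : ∀ {x y : ↥(S' ∪ {v} : Set V)}, (G.induce (S' ∪ {v})).Walk x y →
          Relation.EqvGen R x.1 y.1 := by
        intro x y p
        induction p with
        | nil => exact Relation.EqvGen.refl _
        | @cons x w y h p ih =>
          obtain ⟨xv, hxmem⟩ := x
          obtain ⟨wv, hwmem⟩ := w
          have hxw : G.Adj xv wv := h
          have step : Relation.EqvGen R xv wv := by
            apply Relation.EqvGen.rel
            rcases hxmem with hx | hx
            · rcases hwmem with hw | hw
              · exact Or.inl (reachIn_of_adj G hx hw hxw)
              · have hwv : wv = v := hw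
                subst hwv
                have hxX : xv ∈ Xt' :=
                  hadj xv (hVt ▸ Set.mem_union_left _ (hS' hx)) hxw.symm
                exact Or.inr (Or.inr ⟨rfl, ⟨hx, hxX⟩, hxw.symm⟩)
            · have hxv : xv = v := hx
              subst hxv
              rcases hwmem with hw | hw
              · have hwX : wv ∈ Xt' :=
                  hadj wv (hVt ▸ Set.mem_union_left _ (hS' hw)) hxw
                exact Or.inr (Or.inl ⟨rfl, ⟨hw, hwX⟩, hxw⟩)
              · have hwv : wv = xv := hw
                subst hwv
                exact absurd hxw (G.irrefl)
          exact step.trans _ _ _ ih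
      exact key p
    · -- EqvGen → ReachIn
      intro h
      have key : ∀ {x y : V}, Relation.EqvGen R x y →
          x = y ∨ ReachIn G (S' ∪ {v}) x y := by
        intro x y h
        induction h with
        | rel x y hxy =>
          rcases hxy with hr | ⟨rfl, ⟨hyS, _⟩, hadjv⟩ | ⟨rfl, ⟨hxS, _⟩, hadjv⟩
          · exact Or.inr (reachIn_mono G hsub hr)
          · exact Or.inr (reachIn_of_adj G (Set.mem_union_right _ rfl)
              (Set.mem_union_left _ hyS) hadjv)
          · exact Or.inr (reachIn_of_adj G (Set.mem_union_left _ hxS)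
              (Set.mem_union_right _ rfl) hadjv.symm)
        | refl x => exact Or.inl rfl
        | symm x y _ ih =>
          rcases ih with rfl | hr
          · exact Or.inl rfl
          · exact Or.inr (reachIn_symm G hr)
        | trans x y z _ _ ih₁ ih₂ =>
          rcases ih₁ with rfl | hr₁
          · exact ih₂
          · rcases ih₂ with rfl | hr₂
            · exact Or.inr hr₁
            · exact Or.inr (reachIn_trans G hr₁ hr₂)
      rcases key h with rfl | hr
      · exact reachIn_refl G haS
      · exact hr
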